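/- Over GF(2), for odd n = 2k+1, writing n+1 = 2^a·b with b odd, the polynomial p_n from the recursion p_i = λp_{i−1} + p_{i−2} (p_0=1, p_1=λ) factors as p_n(λ) = λ^(2^a − 1) · (p_{b−1}(λ))^(2^a). Consequently 0 is a root of multiplicity 2^a − 1 and every nonzero root has multiplicity 2^(a+1). -/
import Mathlib
open Polynomial

noncomputable def chebLike : ℕ → Polynomial (ZMod 2)
  | 0 => 1
  | 1 => Polynomial.X
  | (n + 2) => Polynomial.X * chebLike (n + 1) + chebLike n

lemma cheb_two_eq_zero : (2 : Polynomial (ZMod 2)) = 0 := CharTwo.two_eq_zero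

lemma cheb_add_two (n : ℕ) :
    chebLike (n + 2) = X * chebLike (n + 1) + chebLike n := rfl

lemma cheb_key (m : ℕ) :
    chebLike (2 * m + 1) = X * (chebLike m) ^ 2 ∧
      chebLike (2 * m + 2) = (chebLike (m + 1)) ^ 2 + (chebLike m) ^ 2 := by
  induction m with
  | zero =>
    refine ⟨by simp [chebLike], ?_⟩
    show chebLike 2 = _
    rw [cheb_add_two]
    show X * chebLike 1 + chebLike 0 = _
    show X * X + 1 = _
    show _ = X ^ 2 + 1 ^ 2
    ring
  | succ m ih =>
    obtain ⟨h1, h2⟩ := ih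
    have e1 : 2 * (m + 1) + 1 = (2 * m + 1) + 2 := by ring
    have e2 : 2 * (m + 1) + 2 = (2 * m + 2) + 2 := by ring
    have g1 : chebLike (2 * (m + 1) + 1) = X * (chebLike (m + 1)) ^ 2 := by
      rw [e1, cheb_add_two]
      have e4 : 2 * m + 1 + 1 = 2 * m + 2 := by ring
      rw [e4, h1, h2]
      linear_combination (X * chebLike m ^ 2) * cheb_two_eq_zero
    refine ⟨g1, ?_⟩
    rw [e2, cheb_add_two]
    have e3 : 2 * m + 2 + 1 = 2 * (m + 1) + 1 := by ring
    rw [e3, g1, h2]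
    have e5 : m + 1 + 1 = m + 2 := rfl
    rw [e5, cheb_add_two, CharTwo.add_sq, mul_pow]
    ring

lemma cheb_odd (m : ℕ) : chebLike (2 * m + 1) = X * (chebLike m) ^ 2 := (cheb_key m).1

lemma cheb_even (m : ℕ) :
    chebLike (2 * (m + 1)) = (chebLike (m + 1) + chebLike m) ^ 2 := by
  have := (cheb_key m).2
  have e : 2 * (m + 1) = 2 * m + 2 := by ring
  rw [e, this, CharTwo.add_sq]

lemma cheb_cassini (m : ℕ) :
    chebLike (m + 2) * chebLike m + (chebLike (m + 1)) ^ 2 = 1 := by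
  induction m with
  | zero =>
    show (X * chebLike 1 + chebLike 0) * 1 + X ^ 2 = 1
    show (X * X + 1) * 1 + X ^ 2 = 1
    linear_combination (X : Polynomial (ZMod 2)) ^ 2 * cheb_two_eq_zero
  | succ m ih =>
    rw [cheb_add_two (m + 1), cheb_add_two m]
    linear_combination ih - chebLike m * cheb_add_two m + (X ^ 2 * chebLike (m + 1) ^ 2 + X * chebLike (m + 1) * chebLike m) * cheb_two_eq_zero

lemma cheb_eval_zero (m : ℕ) :
    (chebLike (2 * m)).eval 0 = 1 ∧ (chebLike (2 * m + 1)).eval 0 = 0 := by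
  induction m with
  | zero => exact ⟨by simp [chebLike], by simp [chebLike]⟩
  | succ m ih =>
    obtain ⟨h1, h2⟩ := ih
    have e : 2 * (m + 1) = (2 * m + 1) + 1 := by ring
    constructor
    · rw [e, show (2*m+1)+1 = (2*m)+2 from rfl, cheb_add_two]
      simp [h1, h2]
    · rw [show 2*(m+1)+1 = (2*m+1)+2 from by ring, cheb_add_two,
        show (2*m+1)+1 = (2*m)+2 from rfl, cheb_add_two]
      simp [h1, h2]

lemma cheb_eval_zero_even (m : ℕ) : (chebLike (2 * m)).eval 0 = 1 :=
  (cheb_eval_zero m).1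

lemma cheb_eval_zero_odd (m : ℕ) : (chebLike (2 * m + 1)).eval 0 = 0 := by
  rw [cheb_odd]; simp

lemma cheb_deriv_sq (p : Polynomial (ZMod 2)) : derivative (p ^ 2) = 0 := by
  rw [derivative_pow]
  have h : ((2:ℕ) : ZMod 2) = 0 := by decide
  rw [h, map_zero, zero_mul, zero_mul]

lemma cheb_deriv_even (m : ℕ) : derivative (chebLike (2 * m)) = 0 := by
  cases m with
  | zero => simp [chebLike]
  | succ m => rw [cheb_even]; exact cheb_deriv_sq _

lemma cheb_deriv_odd (m : ℕ) :
    derivative (chebLike (2 * m + 1)) = (chebLike m) ^ 2 := by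
  rw [cheb_odd, derivative_mul, cheb_deriv_sq]
  simp

lemma cheb_factor (a : ℕ) : ∀ b : ℕ, 1 ≤ b →
    chebLike (2 ^ a * b - 1) = X ^ (2 ^ a - 1) * (chebLike (b - 1)) ^ (2 ^ a) := by
  induction a with
  | zero => intro b hb; simp
  | succ a ih =>
    intro b hb
    have hpos : 1 ≤ 2 ^ a * b := Nat.one_le_iff_ne_zero.2 (by positivity)
    have e : 2 ^ (a + 1) * b - 1 = 2 * (2 ^ a * b - 1) + 1 := by
      rw [pow_succ]
      have h2 : 2 ^ a * 2 * b = 2 * (2 ^ a * b) := by ring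
      omega
    rw [e, cheb_odd, ih b hb, mul_pow, ← pow_mul, ← pow_mul]
    rw [show X ^ ((2^a - 1) * 2) = X ^ (2^(a+1) - 2) from by
      congr 1
      have : 1 ≤ 2 ^ a := Nat.one_le_two_pow
      rw [pow_succ]; omega]
    rw [show 2 ^ a * 2 = 2 ^ (a+1) from (pow_succ 2 a).symm]
    rw [← mul_assoc, ← pow_succ']
    congr 2
    have : 2 ≤ 2 ^ (a+1) := by
      calc 2 = 2^1 := rfl
      _ ≤ 2^(a+1) := Nat.pow_le_pow_right (by norm_num) (by omega)
    omega

lemma rm_pow {K : Type*} [Field K] {p : Polynomial K} (hp : p ≠ 0) (x : K) (n : ℕ) :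
    rootMultiplicity x (p ^ n) = n * rootMultiplicity x p := by
  induction n with
  | zero =>
    simp only [pow_zero, zero_mul]
    exact rootMultiplicity_eq_zero (by simp [IsRoot])
  | succ n ih =>
    rw [pow_succ, rootMultiplicity_mul (mul_ne_zero (pow_ne_zero _ hp) hp), ih]
    ring

lemma rm_le_one {K : Type*} [Field K] {q : Polynomial K} {x : K}
    (hd : ¬ (derivative q).IsRoot x) : rootMultiplicity x q ≤ 1 := by
  by_contra h
  push_neg at h
  have hq : q ≠ 0 := fun h0 => hd (by simp [h0])
  have hdvd : (X - C x) ^ 2 ∣ q :=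
    dvd_trans (pow_dvd_pow _ h) (pow_rootMultiplicity_dvd q x)
  obtain ⟨r, hr⟩ := hdvd
  apply hd
  rw [hr, derivative_mul, derivative_pow, derivative_sub, derivative_X, derivative_C, sub_zero]
  simp [IsRoot]

theorem stmt_6 (n a b : ℕ) (hn : Odd n) (hb : Odd b) (hab : n + 1 = 2 ^ a * b) :
    chebLike n = Polynomial.X ^ (2 ^ a - 1) * (chebLike (b - 1)) ^ (2 ^ a) ∧
    ((chebLike n).map (algebraMap (ZMod 2) (AlgebraicClosure (ZMod 2)))).rootMultiplicity 0 =
      2 ^ a - 1 ∧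
    ∀ x : AlgebraicClosure (ZMod 2), x ≠ 0 →
      ((chebLike n).map (algebraMap (ZMod 2) (AlgebraicClosure (ZMod 2)))).IsRoot x →
      ((chebLike n).map (algebraMap (ZMod 2) (AlgebraicClosure (ZMod 2)))).rootMultiplicity x =
        2 ^ (a + 1) := by
  classical
  set K := AlgebraicClosure (ZMod 2) with hK
  set φ := algebraMap (ZMod 2) K with hφ
  obtain ⟨m, hm⟩ := hb
  obtain ⟨l, hl⟩ := hn
  have hb1 : 1 ≤ b := by omega
  have ha : 1 ≤ a := by
    rcases a with _ | a
    · exfalso; simp at hab; omega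
    · omega
  have ha2 : 2 ≤ 2 ^ a := by
    calc (2:ℕ) = 2 ^ 1 := rfl
    _ ≤ 2 ^ a := Nat.pow_le_pow_right (by norm_num) ha
  have hneq : n = 2 ^ a * b - 1 := by omega
  have hfac : chebLike n = X ^ (2 ^ a - 1) * (chebLike (b - 1)) ^ (2 ^ a) := by
    rw [hneq]; exact cheb_factor a b hb1
  set E := 2 ^ a - 1 with hE
  set F := (chebLike (b - 1)).map φ with hF
  have hmapfac : (chebLike n).map φ = X ^ E * F ^ (2 ^ a) := by
    rw [hfac, Polynomial.map_mul, Polynomial.map_pow, Polynomial.map_pow, Polynomial.map_X]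
  have hF0 : F.eval 0 = 1 := by
    rw [hF, show b - 1 = 2 * m from by omega, eval_map,
      show (0 : K) = φ 0 from (map_zero φ).symm, eval₂_at_apply, cheb_eval_zero_even, map_one]
  have hFne : F ≠ 0 := fun h => by simp [h] at hF0
  have hXEne : (X : Polynomial K) ^ E ≠ 0 := pow_ne_zero _ X_ne_zero
  refine ⟨hfac, ?_, ?_⟩
  · rw [hmapfac, rootMultiplicity_mul (mul_ne_zero hXEne (pow_ne_zero _ hFne))]
    have h1 : rootMultiplicity 0 ((X : Polynomial K) ^ E) = E := by
      have : (X : Polynomial K) ^ E = (X - C 0) ^ E := by simp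
      rw [this, rootMultiplicity_X_sub_C_pow]
    have h2 : rootMultiplicity 0 (F ^ 2 ^ a) = 0 :=
      rootMultiplicity_eq_zero (by simp [IsRoot, hF0])
    rw [h1, h2, add_zero]
  · intro x hx hroot
    by_cases hm0 : m = 0
    · exfalso
      apply hx
      have hb1' : b = 1 := by omega
      have hFone : F = 1 := by
        rw [hF, hb1']
        show (chebLike 0).map φ = 1
        simp [chebLike]
      rw [hmapfac, hFone] at hroot
      simp only [IsRoot, one_pow, mul_one, eval_pow, eval_X] at hroot
      exact pow_eq_zero_iff (by omega : E ≠ 0) |>.mp hroot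
    · set k := m - 1 with hk
      have hmk : m = k + 1 := by omega
      set q := chebLike (k + 1) + chebLike k with hq
      have hq2 : chebLike (b - 1) = q ^ 2 := by
        rw [show b - 1 = 2 * (k + 1) from by omega]
        exact cheb_even k
      set Q := q.map φ with hQ
      have hQpow : (chebLike n).map φ = X ^ E * Q ^ (2 ^ (a + 1)) := by
        rw [hmapfac, hF, hq2, Polynomial.map_pow, ← pow_mul,
          show 2 * 2 ^ a = 2 ^ (a + 1) from by rw [pow_succ]; ring]
      obtain ⟨u, hu, hucase⟩ :
          ∃ u, derivative q = (chebLike u) ^ 2 ∧ (2 * u + 1 = k ∨ 2 * u + 1 = k + 1) := by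
        rcases Nat.even_or_odd k with ⟨u, hpar⟩ | ⟨u, hpar⟩
        · refine ⟨u, ?_, Or.inr (by omega)⟩
          rw [hq, derivative_add, show k + 1 = 2 * u + 1 from by omega,
            show k = 2 * u from by omega, cheb_deriv_odd, cheb_deriv_even, add_zero]
        · refine ⟨u, ?_, Or.inl (by omega)⟩
          rw [hq, derivative_add, show k + 1 = 2 * (u + 1) from by omega,
            show k = 2 * u + 1 from by omega, cheb_deriv_odd, cheb_deriv_even, zero_add]
      -- x is a root of Q
      have hrootQ : Q.IsRoot x := by
        rw [hQpow] at hroot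
        simp only [IsRoot, eval_mul, eval_pow, eval_X] at hroot
        rcases mul_eq_zero.mp hroot with h | h
        · exact absurd (pow_eq_zero_iff (by omega : E ≠ 0) |>.mp h) hx
        · exact pow_eq_zero_iff (by positivity : 2 ^ (a+1) ≠ 0) |>.mp h
      -- derivative of Q does not vanish at x
      have hdQ : ¬ (derivative Q).IsRoot x := by
        intro hcon
        have hdermap : derivative Q = ((chebLike u).map φ) ^ 2 := by
          rw [hQ, derivative_map, hu, Polynomial.map_pow]
        rw [hdermap] at hcon
        have hu0 : ((chebLike u).map φ).eval x = 0 := by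
          simpa [IsRoot, eval_pow, pow_eq_zero_iff] using hcon
        have hodd0 : ((chebLike (2 * u + 1)).map φ).eval x = 0 := by
          rw [cheb_odd, Polynomial.map_mul, Polynomial.map_pow, Polynomial.map_X]
          simp [hu0]
        have hQx : ((chebLike (k + 1)).map φ).eval x + ((chebLike k).map φ).eval x = 0 := by
          have := hrootQ
          rw [hQ, hq, Polynomial.map_add] at this
          simpa [IsRoot] using this
        have hboth : ((chebLike (k + 1)).map φ).eval x = 0 ∧
            ((chebLike k).map φ).eval x = 0 := by
          rcases hucase with h | h
          · rw [h] at hodd0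
            constructor
            · have := hQx; rw [hodd0] at this; simpa using this
            · exact hodd0
          · rw [h] at hodd0
            refine ⟨hodd0, ?_⟩
            have := hQx; rw [hodd0] at this; simpa using this
        have hcas := congrArg (fun p => (p.map φ).eval x) (cheb_cassini k)
        simp only [Polynomial.map_add, Polynomial.map_mul, Polynomial.map_pow,
          Polynomial.map_one, eval_add, eval_mul, eval_pow, eval_one,
          hboth.1, hboth.2, mul_zero, zero_add] at hcas
        norm_num at hcas
      have hQne : Q ≠ 0 := fun h => hdQ (by simp [h])
      have hmultQ : rootMultiplicity x Q = 1 :=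
        le_antisymm (rm_le_one hdQ) ((rootMultiplicity_pos hQne).mpr hrootQ)
      rw [hQpow, rootMultiplicity_mul (mul_ne_zero hXEne (pow_ne_zero _ hQne)),
        rm_pow hQne, hmultQ, mul_one,
        rootMultiplicity_eq_zero (by simp [IsRoot, pow_ne_zero, hx] : ¬ ((X : Polynomial K) ^ E).IsRoot x),
        zero_add]
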